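/- Let $A, B \in \mathbb{R}^{a\times n}$ and let $D \in \mathbb{R}^{a\times a}$ be nonsingular. Then $|\Phi(A,B) - \Phi(DA, D^{-T}B)| \le (\|A\|_F\|B\|_F + \|DA\|_F\|D^{-T}B\|_F)\log_2 a$. -/

import Mathlib

open Matrix

/-- Quasi-entropy of a pair of matrices. -/
noncomputable def Phi {a n : ℕ} (A B : Matrix (Fin a) (Fin n) ℝ) : ℝ :=
  ∑ i, ∑ j, -(A i j * B i j) * Real.logb 2 |A i j * B i j|

/-- Frobenius norm. -/
noncomputable def frob {a n : ℕ} (A : Matrix (Fin a) (Fin n) ℝ) : ℝ :=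
  Real.sqrt (∑ i, ∑ j, (A i j) ^ 2)

section Aux
open Real Finset

lemma I2 (q r : ℝ) (hq : 0 ≤ q) (hr : 0 ≤ r) :
    q * Real.log q + r * Real.log r ≤ (q + r) * Real.log (q + r) := by
  have h1 : q * Real.log q ≤ q * Real.log (q + r) := by
    rcases eq_or_lt_of_le hq with h | h
    · simp [← h]
    · exact mul_le_mul_of_nonneg_left (Real.log_le_log h (by linarith)) hq
  have h2 : r * Real.log r ≤ r * Real.log (q + r) := by
    rcases eq_or_lt_of_le hr with h | h
    · simp [← h]
    · exact mul_le_mul_of_nonneg_left (Real.log_le_log h (by linarith)) hr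
  nlinarith [h1, h2]

lemma I1 (q r : ℝ) (hq : 0 ≤ q) (hr : 0 ≤ r) :
    (q + r) * Real.log (q + r) - (q + r) * Real.log 2 ≤ q * Real.log q + r * Real.log r := by
  have hlog2 : (0:ℝ) ≤ Real.log 2 := Real.log_nonneg (by norm_num)
  rcases eq_or_lt_of_le hq with h | hq'
  · rw [← h]; simp only [zero_add, Real.log_zero, zero_mul, mul_zero]
    nlinarith [mul_nonneg hr hlog2]
  rcases eq_or_lt_of_le hr with h | hr'
  · rw [← h]; simp only [add_zero, Real.log_zero, zero_mul, mul_zero]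
    nlinarith [mul_nonneg hq hlog2]
  have hs : (0:ℝ) < q + r := by linarith
  have h1 := Real.log_le_sub_one_of_pos (show (0:ℝ) < (q+r)/(2*q) by positivity)
  have h2 := Real.log_le_sub_one_of_pos (show (0:ℝ) < (q+r)/(2*r) by positivity)
  have e1 : Real.log ((q+r)/(2*q)) = Real.log (q+r) - (Real.log 2 + Real.log q) := by
    rw [Real.log_div hs.ne' (by positivity), Real.log_mul two_ne_zero hq'.ne']
  have e2 : Real.log ((q+r)/(2*r)) = Real.log (q+r) - (Real.log 2 + Real.log r) := by
    rw [Real.log_div hs.ne' (by positivity), Real.log_mul two_ne_zero hr'.ne']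
  rw [e1] at h1; rw [e2] at h2
  have m1 : q * (Real.log (q+r) - (Real.log 2 + Real.log q)) ≤ q * ((q+r)/(2*q) - 1) :=
    mul_le_mul_of_nonneg_left h1 hq
  have m2 : r * (Real.log (q+r) - (Real.log 2 + Real.log r)) ≤ r * ((q+r)/(2*r) - 1) :=
    mul_le_mul_of_nonneg_left h2 hr
  have d1 : q * ((q+r)/(2*q) - 1) = (q+r)/2 - q := by field_simp
  have d2 : r * ((q+r)/(2*r) - 1) = (q+r)/2 - r := by field_simp
  rw [d1] at m1; rw [d2] at m2
  nlinarith [m1, m2]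

lemma Eupper {a : ℕ} (w : Fin a → ℝ) (hw : ∀ i, 0 ≤ w i) :
    ∑ i, w i * Real.log (w i) ≤ (∑ i, w i) * Real.log (∑ i, w i) := by
  set m := ∑ i, w i with hm
  have key : ∀ i, w i * Real.log (w i) ≤ w i * Real.log m := by
    intro i
    rcases eq_or_lt_of_le (hw i) with h | h
    · simp [← h]
    · exact mul_le_mul_of_nonneg_left
        (Real.log_le_log h (Finset.single_le_sum (fun j _ => hw j) (Finset.mem_univ i))) (hw i)
  calc ∑ i, w i * Real.log (w i) ≤ ∑ i, w i * Real.log m := Finset.sum_le_sum fun i _ => key i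
    _ = m * Real.log m := by rw [← Finset.sum_mul]

lemma Elower {a : ℕ} (ha : 1 ≤ a) (w : Fin a → ℝ) (hw : ∀ i, 0 ≤ w i) :
    (∑ i, w i) * Real.log (∑ i, w i) - (∑ i, w i) * Real.log a ≤ ∑ i, w i * Real.log (w i) := by
  set m := ∑ i, w i with hm
  have hm0 : 0 ≤ m := Finset.sum_nonneg fun i _ => hw i
  have ha0 : (0:ℝ) < a := by exact_mod_cast ha
  rcases eq_or_lt_of_le hm0 with h | hmpos
  · have hz : ∀ i, w i = 0 := by
      intro i
      have := Finset.sum_eq_zero_iff_of_nonneg (fun j (_ : j ∈ Finset.univ) => hw j)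
      exact (this.mp h.symm) i (Finset.mem_univ i)
    simp [← h, hz]
  have key : ∀ i, w i * Real.log m - w i * Real.log a - (m/a - w i) ≤ w i * Real.log (w i) := by
    intro i
    rcases eq_or_lt_of_le (hw i) with h | h
    · simp [← h]; positivity
    · have h1 := Real.log_le_sub_one_of_pos (show (0:ℝ) < m/(a * w i) by positivity)
      have e1 : Real.log (m/(a * w i)) = Real.log m - (Real.log a + Real.log (w i)) := by
        rw [Real.log_div hmpos.ne' (by positivity), Real.log_mul ha0.ne' h.ne']
      rw [e1] at h1
      have m1 : w i * (Real.log m - (Real.log a + Real.log (w i))) ≤ w i * (m/(a * w i) - 1) :=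
        mul_le_mul_of_nonneg_left h1 (hw i)
      have d1 : w i * (m/(a * w i) - 1) = m/a - w i := by field_simp
      rw [d1] at m1
      nlinarith [m1]
  have hsum := Finset.sum_le_sum (fun i (_ : i ∈ Finset.univ) => key i)
  have lhs_eq : ∑ i, (w i * Real.log m - w i * Real.log a - (m/a - w i))
      = m * Real.log m - m * Real.log a := by
    rw [Finset.sum_sub_distrib, Finset.sum_sub_distrib, ← Finset.sum_mul, ← Finset.sum_mul,
      Finset.sum_sub_distrib, Finset.sum_const, Finset.card_univ, Fintype.card_fin]
    field_simp
    have hcancel : (a:ℝ) * (m / a) = m := by field_simp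
    rw [nsmul_eq_mul]
    linear_combination (-(Real.log m - Real.log a + 1)) * hm - hcancel
  rw [lhs_eq] at hsum
  exact hsum

lemma abs_split (t : ℝ) : |t| = max t 0 + max (-t) 0 := by
  rcases le_total t 0 with h | h
  · rw [abs_of_nonpos h, max_eq_right h, max_eq_left (by linarith)]; ring
  · rw [abs_of_nonneg h, max_eq_left h, max_eq_right (by linarith)]; ring

lemma self_split (t : ℝ) : t = max t 0 - max (-t) 0 := by
  rcases le_total t 0 with h | h
  · rw [max_eq_right h, max_eq_left (by linarith)]; ring
  · rw [max_eq_left h, max_eq_right (by linarith)]; ring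

lemma f_split (t : ℝ) : -t * Real.log |t| =
    -(max t 0 * Real.log (max t 0)) + max (-t) 0 * Real.log (max (-t) 0) := by
  rcases le_total t 0 with h | h
  · rw [abs_of_nonpos h, max_eq_right h, max_eq_left (by linarith)]; ring
  · rw [abs_of_nonneg h, max_eq_left h, max_eq_right (by linarith)]; ring

lemma keyLog {a : ℕ} (ha : 2 ≤ a) (x : Fin a → ℝ) :
    |(∑ i, -(x i) * Real.log |x i|) - (-(∑ i, x i) * Real.log |∑ i, x i|)|
      ≤ (∑ i, |x i|) * Real.log a := by
  have hlog2a : Real.log 2 ≤ Real.log a :=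
    Real.log_le_log two_pos (by exact_mod_cast ha)
  have hloga : 0 ≤ Real.log a :=
    le_trans (Real.log_nonneg one_le_two) hlog2a
  have hlog2 : 0 ≤ Real.log 2 := Real.log_nonneg one_le_two
  set p := ∑ i, max (x i) 0 with hpdef
  set q := ∑ i, max (-x i) 0 with hqdef
  have hp : 0 ≤ p := Finset.sum_nonneg fun i _ => le_max_right _ _
  have hq : 0 ≤ q := Finset.sum_nonneg fun i _ => le_max_right _ _
  have hpq : ∑ i, |x i| = p + q := by
    rw [hpdef, hqdef, ← Finset.sum_add_distrib]
    exact Finset.sum_congr rfl fun i _ => abs_split (x i)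
  have hS : ∑ i, x i = p - q := by
    rw [hpdef, hqdef, ← Finset.sum_sub_distrib]
    exact Finset.sum_congr rfl fun i _ => self_split (x i)
  have hsplit : ∑ i, -(x i) * Real.log |x i| =
      -(∑ i, max (x i) 0 * Real.log (max (x i) 0)) +
        ∑ i, max (-x i) 0 * Real.log (max (-x i) 0) := by
    rw [← Finset.sum_neg_distrib, ← Finset.sum_add_distrib]
    exact Finset.sum_congr rfl fun i _ => f_split (x i)
  set Fp := ∑ i, max (x i) 0 * Real.log (max (x i) 0) with hFp
  set Fq := ∑ i, max (-x i) 0 * Real.log (max (-x i) 0) with hFq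
  have hFpub : Fp ≤ p * Real.log p := Eupper _ fun i => le_max_right _ _
  have hFplb : p * Real.log p - p * Real.log a ≤ Fp :=
    Elower (by omega) _ fun i => le_max_right _ _
  have hFqub : Fq ≤ q * Real.log q := Eupper _ fun i => le_max_right _ _
  have hFqlb : q * Real.log q - q * Real.log a ≤ Fq :=
    Elower (by omega) _ fun i => le_max_right _ _
  -- G bounds
  have hG : -(p * Real.log a) ≤
        -(p * Real.log p) + q * Real.log q + (p - q) * Real.log |p - q| ∧
      -(p * Real.log p) + q * Real.log q + (p - q) * Real.log |p - q| ≤ q * Real.log a := by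
    rcases le_total q p with h | h
    · have habs : |p - q| = p - q := abs_of_nonneg (by linarith)
      rw [habs]
      have hi2 := I2 q (p - q) hq (by linarith)
      have hi1 := I1 q (p - q) hq (by linarith)
      have hqp : q + (p - q) = p := by ring
      rw [hqp] at hi2 hi1
      constructor
      · nlinarith [mul_le_mul_of_nonneg_left hlog2a hp]
      · nlinarith [mul_nonneg hq hloga]
    · have habs : |p - q| = q - p := by rw [abs_sub_comm]; exact abs_of_nonneg (by linarith)
      rw [habs]
      have hi2 := I2 p (q - p) hp (by linarith)
      have hi1 := I1 p (q - p) hp (by linarith)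
      have hqp : p + (q - p) = q := by ring
      rw [hqp] at hi2 hi1
      constructor
      · nlinarith [mul_nonneg hp hloga]
      · nlinarith [mul_le_mul_of_nonneg_left hlog2a hq]
  rw [hsplit, hS, hpq, abs_le]
  constructor
  · linarith [hG.1, hFpub, hFqlb]
  · linarith [hG.2, hFplb, hFqub]

lemma colsum {a n : ℕ} (A B : Matrix (Fin a) (Fin n) ℝ)
    (D : Matrix (Fin a) (Fin a) ℝ) (hD : IsUnit D) (j : Fin n) :
    ∑ i, (D * A) i j * ((D⁻¹)ᵀ * B) i j = ∑ i, A i j * B i j := by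
  set U := D * A with hU
  set V := (D⁻¹)ᵀ * B with hV
  have hmat : Uᵀ * V = Aᵀ * B := by
    rw [hU, hV, Matrix.transpose_mul, Matrix.mul_assoc, ← Matrix.mul_assoc Dᵀ,
      ← Matrix.transpose_mul, Matrix.nonsing_inv_mul D ((Matrix.isUnit_iff_isUnit_det D).mp hD),
      Matrix.transpose_one, Matrix.one_mul]
  have h := congrFun (congrFun hmat j) j
  simpa [Matrix.mul_apply, Matrix.transpose_apply] using h

lemma cs {ι : Type*} [Fintype ι] (f g : ι → ℝ) :
    ∑ i, |f i| * |g i| ≤ Real.sqrt (∑ i, f i ^ 2) * Real.sqrt (∑ i, g i ^ 2) := by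
  have h := Finset.sum_mul_sq_le_sq_mul_sq Finset.univ (fun i => |f i|) (fun i => |g i|)
  simp only [sq_abs] at h
  have hnn : 0 ≤ ∑ i, |f i| * |g i| :=
    Finset.sum_nonneg fun i _ => mul_nonneg (abs_nonneg _) (abs_nonneg _)
  calc ∑ i, |f i| * |g i| = Real.sqrt ((∑ i, |f i| * |g i|) ^ 2) := (Real.sqrt_sq hnn).symm
    _ ≤ Real.sqrt ((∑ i, f i ^ 2) * ∑ i, g i ^ 2) := Real.sqrt_le_sqrt h
    _ = Real.sqrt (∑ i, f i ^ 2) * Real.sqrt (∑ i, g i ^ 2) :=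
        Real.sqrt_mul (Finset.sum_nonneg fun i _ => sq_nonneg _) _

lemma colLemma {a : ℕ} (ha : 1 ≤ a) (x y : Fin a → ℝ) (hxy : ∑ i, x i = ∑ i, y i) :
    |(∑ i, -(x i) * Real.log |x i|) - (∑ i, -(y i) * Real.log |y i|)|
      ≤ (∑ i, |x i| + ∑ i, |y i|) * Real.log a := by
  rcases eq_or_lt_of_le ha with h | h
  · have h1 : a = 1 := h.symm
    subst h1
    simp only [Fin.sum_univ_one] at hxy ⊢
    simp [hxy]
  · have k1 := keyLog h x
    have k2 := keyLog h y
    rw [hxy] at k1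
    have tri := abs_sub_le (∑ i, -(x i) * Real.log |x i|)
      (-(∑ i, y i) * Real.log |∑ i, y i|) (∑ i, -(y i) * Real.log |y i|)
    rw [abs_sub_comm (-(∑ i, y i) * Real.log |∑ i, y i|)] at tri
    nlinarith [k1, k2, tri]

lemma frob_bound {a n : ℕ} (A B : Matrix (Fin a) (Fin n) ℝ) :
    ∑ j, ∑ i, |A i j| * |B i j| ≤ frob A * frob B := by
  have h1 : ∀ j : Fin n, ∑ i, |A i j| * |B i j| ≤
      Real.sqrt (∑ i, A i j ^ 2) * Real.sqrt (∑ i, B i j ^ 2) := fun j => cs _ _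
  have h2 : ∑ j, ∑ i, |A i j| * |B i j| ≤
      ∑ j, Real.sqrt (∑ i, A i j ^ 2) * Real.sqrt (∑ i, B i j ^ 2) :=
    Finset.sum_le_sum fun j _ => h1 j
  have h3 := cs (fun j : Fin n => Real.sqrt (∑ i, A i j ^ 2))
    (fun j : Fin n => Real.sqrt (∑ i, B i j ^ 2))
  simp only [abs_of_nonneg (Real.sqrt_nonneg _),
    Real.sq_sqrt (Finset.sum_nonneg fun i _ => sq_nonneg _)] at h3
  have hfA : Real.sqrt (∑ j, ∑ i, A i j ^ 2) = frob A := by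
    rw [frob, Finset.sum_comm]
  have hfB : Real.sqrt (∑ j, ∑ i, B i j ^ 2) = frob B := by
    rw [frob, Finset.sum_comm]
  rw [hfA, hfB] at h3
  linarith

theorem stmt2 (a n : ℕ) (A B : Matrix (Fin a) (Fin n) ℝ)
    (D : Matrix (Fin a) (Fin a) ℝ) (hD : IsUnit D) :
    |Phi A B - Phi (D * A) ((D⁻¹)ᵀ * B)| ≤
      (frob A * frob B + frob (D * A) * frob ((D⁻¹)ᵀ * B)) * Real.logb 2 a := by
  rcases Nat.eq_zero_or_pos a with h0 | ha1
  · subst h0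
    simp [Phi, frob]
  set U := D * A with hU
  set V := (D⁻¹)ᵀ * B with hV
  have hloga : 0 ≤ Real.log a :=
    Real.log_nonneg (by exact_mod_cast ha1)
  -- log-version
  have hcol : ∀ j : Fin n,
      |(∑ i, -(A i j * B i j) * Real.log |A i j * B i j|) -
        (∑ i, -(U i j * V i j) * Real.log |U i j * V i j|)| ≤
      ((∑ i, |A i j * B i j|) + ∑ i, |U i j * V i j|) * Real.log a := by
    intro j
    exact colLemma ha1 _ _ (colsum A B D hD j).symm
  have key : |(∑ j, ∑ i, -(A i j * B i j) * Real.log |A i j * B i j|) -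
      (∑ j, ∑ i, -(U i j * V i j) * Real.log |U i j * V i j|)| ≤
      (frob A * frob B + frob U * frob V) * Real.log a := by
    have t1 : |(∑ j, ∑ i, -(A i j * B i j) * Real.log |A i j * B i j|) -
        (∑ j, ∑ i, -(U i j * V i j) * Real.log |U i j * V i j|)| ≤
        ∑ j, |(∑ i, -(A i j * B i j) * Real.log |A i j * B i j|) -
          (∑ i, -(U i j * V i j) * Real.log |U i j * V i j|)| := by
      rw [← Finset.sum_sub_distrib]
      exact Finset.abs_sum_le_sum_abs _ _
    have t2 : ∑ j, |(∑ i, -(A i j * B i j) * Real.log |A i j * B i j|) -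
          (∑ i, -(U i j * V i j) * Real.log |U i j * V i j|)| ≤
        ∑ j, ((∑ i, |A i j * B i j|) + ∑ i, |U i j * V i j|) * Real.log a :=
      Finset.sum_le_sum fun j _ => hcol j
    have t3 : ∑ j, ((∑ i, |A i j * B i j|) + ∑ i, |U i j * V i j|) * Real.log a =
        ((∑ j, ∑ i, |A i j * B i j|) + ∑ j, ∑ i, |U i j * V i j|) * Real.log a := by
      rw [← Finset.sum_mul, Finset.sum_add_distrib]
    have t4 : (∑ j, ∑ i, |A i j * B i j|) ≤ frob A * frob B := by
      have := frob_bound A B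
      simpa [abs_mul] using this
    have t5 : (∑ j, ∑ i, |U i j * V i j|) ≤ frob U * frob V := by
      have := frob_bound U V
      simpa [abs_mul] using this
    have t6 : ((∑ j, ∑ i, |A i j * B i j|) + ∑ j, ∑ i, |U i j * V i j|) * Real.log a ≤
        (frob A * frob B + frob U * frob V) * Real.log a :=
      mul_le_mul_of_nonneg_right (by linarith) hloga
    calc _ ≤ _ := t1
      _ ≤ _ := t2
      _ = _ := t3
      _ ≤ _ := t6
  -- convert to logb
  have hPhieq : ∀ (X Y : Matrix (Fin a) (Fin n) ℝ),
      Phi X Y = (∑ j, ∑ i, -(X i j * Y i j) * Real.log |X i j * Y i j|) / Real.log 2 := by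
    intro X Y
    rw [Phi, Finset.sum_comm, Finset.sum_div]
    exact Finset.sum_congr rfl fun j _ => by
      rw [Finset.sum_div]
      exact Finset.sum_congr rfl fun i _ => by
        rw [← Real.log_div_log, ← mul_div_assoc]
  have hlog2 : (0:ℝ) < Real.log 2 := Real.log_pos (by norm_num)
  rw [hPhieq A B, hPhieq U V, ← Real.log_div_log, div_sub_div_same, abs_div,
    abs_of_pos hlog2, ← mul_div_assoc]
  exact div_le_div_of_nonneg_right key hlog2.le

end Aux
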